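/- Fix a positive integer L, distinct positive integers i_1 < ... < i_g with 𝕀 = {i_1,...,i_g}, and multiplicities m_i ≥ 1 (i ∈ 𝕀). Assume the configuration condition p_i ≥ 0 for all i ∈ 𝕀, where p_i = L - 2 Σ_{j∈𝕀} min(i,j) m_j. Then the g×g matrix Ω with entries Ω_{ij} = δ_{ij} p_i m_i + 2 min(i,j) m_i m_j (i, j ∈ 𝕀) is symmetric and positive definite. -/

import Mathlib

open Matrix

/-!
Combinatorial Bethe ansatz data.  Fix a system size `L`, distinct positive integers
`i₁ < … < i_g` (encoded by a strictly monotone `ι : Fin g → ℕ` with positive values)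
and multiplicities `m : Fin g → ℕ` with `m a ≥ 1`.
-/

/-- The vacancy number `p_i = L - 2 Σ_{j ∈ 𝕀} min(i,j) m_j`. -/
def vacancy (L g : ℕ) (ι m : Fin g → ℕ) (a : Fin g) : ℤ :=
  (L : ℤ) - 2 * ∑ b : Fin g, (min (ι a) (ι b) : ℤ) * m b

/-- The period matrix `Ω_{ij} = δ_{ij} p_i m_i + 2 min(i,j) m_i m_j`. -/
noncomputable def periodMatrix (L g : ℕ) (ι m : Fin g → ℕ) :
    Matrix (Fin g) (Fin g) ℝ :=
  Matrix.of fun a b =>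
    (if a = b then (vacancy L g ι m a : ℝ) * m a else 0) +
      2 * (min (ι a) (ι b) : ℝ) * (m a) * (m b)

open Matrix Finset

lemma filter_range_lt (N c : ℕ) (hc : c ≤ N) :
    (Finset.range N).filter (fun k => k < c) = Finset.range c := by
  ext k; simp only [Finset.mem_filter, Finset.mem_range]; omega

lemma min_eq_sum (N p q : ℕ) (hp : p ≤ N) (hq : q ≤ N) :
    (min p q : ℝ) =
      ∑ k ∈ Finset.range N, (if k < p then (1:ℝ) else 0) * (if k < q then (1:ℝ) else 0) := by
  have : ∀ k, (if k < p then (1:ℝ) else 0) * (if k < q then (1:ℝ) else 0)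
      = if k < min p q then (1:ℝ) else 0 := by
    intro k; by_cases h1 : k < p <;> by_cases h2 : k < q <;> simp [h1, h2, lt_min_iff]
  rw [Finset.sum_congr rfl fun k _ => this k, Finset.sum_boole,
    filter_range_lt N (min p q) (le_trans (min_le_left _ _) hp)]
  simp

lemma gram_pos {g : ℕ} (ι : Fin g → ℕ) (hι : StrictMono ι) (hιpos : ∀ a, 0 < ι a)
    (y : Fin g → ℝ) (hy : y ≠ 0) :
    0 < ∑ a : Fin g, ∑ b : Fin g, (min (ι a) (ι b) : ℝ) * y a * y b := by
  obtain ⟨a₀, ha₀⟩ := Function.ne_iff.mp hy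
  -- largest index with y ≠ 0
  obtain ⟨c, hc, hcmax⟩ := Finset.exists_max_image (Finset.univ.filter fun a => y a ≠ 0)
    id ⟨a₀, by simpa using ha₀⟩
  simp only [Finset.mem_filter, Finset.mem_univ, true_and] at hc
  have hzero : ∀ a, c < a → y a = 0 := by
    intro a hca
    by_contra h
    have := hcmax a (by simp [h])
    simp at this; omega
  -- choose N bounding all ι a
  obtain ⟨N, hN⟩ : ∃ N, ∀ a, ι a ≤ N := ⟨Finset.univ.sup ι, fun a => Finset.le_sup (by simp)⟩
  set f : ℕ → Fin g → ℝ := fun k a => if k < ι a then (1:ℝ) else 0 with hf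
  have hrw : ∑ a : Fin g, ∑ b : Fin g, (min (ι a) (ι b) : ℝ) * y a * y b
      = ∑ k ∈ Finset.range N, (∑ a : Fin g, f k a * y a) ^ 2 := by
    have : ∀ a b : Fin g, (min (ι a) (ι b) : ℝ) * y a * y b
        = ∑ k ∈ Finset.range N, (f k a * y a) * (f k b * y b) := by
      intro a b
      rw [min_eq_sum N (ι a) (ι b) (hN a) (hN b), Finset.sum_mul, Finset.sum_mul]
      exact Finset.sum_congr rfl fun k _ => by ring
    calc ∑ a : Fin g, ∑ b : Fin g, (min (ι a) (ι b) : ℝ) * y a * y b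
        = ∑ a : Fin g, ∑ b : Fin g, ∑ k ∈ Finset.range N, (f k a * y a) * (f k b * y b) := by
          exact Finset.sum_congr rfl fun a _ => Finset.sum_congr rfl fun b _ => this a b
      _ = ∑ a : Fin g, ∑ k ∈ Finset.range N, ∑ b : Fin g, (f k a * y a) * (f k b * y b) :=
          Finset.sum_congr rfl fun a _ => Finset.sum_comm
      _ = ∑ k ∈ Finset.range N, ∑ a : Fin g, ∑ b : Fin g, (f k a * y a) * (f k b * y b) :=
          Finset.sum_comm
      _ = ∑ k ∈ Finset.range N, (∑ a : Fin g, f k a * y a) ^ 2 := by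
          refine Finset.sum_congr rfl fun k _ => ?_
          rw [sq, Finset.sum_mul]
          refine Finset.sum_congr rfl fun a _ => ?_
          rw [Finset.mul_sum]
  rw [hrw]
  have hk₀ : ι c - 1 ∈ Finset.range N := by
    have := hN c; have := hιpos c; simp only [Finset.mem_range]; omega
  have hterm : (∑ a : Fin g, f (ι c - 1) a * y a) ^ 2 = (y c)^2 := by
    congr 1
    rw [Finset.sum_eq_single c]
    · simp only [hf]
      rw [if_pos (by have := hιpos c; omega)]; ring
    · intro a _ hac
      rcases lt_or_gt_of_ne hac with h | h
      · have : ι a < ι c := hι h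
        simp only [hf]; rw [if_neg (by omega)]; ring
      · rw [hzero a h]; ring
    · simp
  calc (0:ℝ) < (y c)^2 := by positivity
    _ = (∑ a : Fin g, f (ι c - 1) a * y a) ^ 2 := hterm.symm
    _ ≤ ∑ k ∈ Finset.range N, (∑ a : Fin g, f k a * y a) ^ 2 :=
        Finset.single_le_sum (f := fun k => (∑ a : Fin g, f k a * y a) ^ 2) (fun k _ => sq_nonneg _) hk₀

/-- Under the configuration condition `p_i ≥ 0` for all `i ∈ 𝕀`,
the period matrix `Ω = (δ_{ij} p_i m_i + 2 min(i,j) m_i m_j)_{i,j ∈ 𝕀}` is symmetric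
and positive definite. -/
theorem periodMatrix_posDef (L g : ℕ) (hL : 0 < L) (ι : Fin g → ℕ)
    (hι : StrictMono ι) (hιpos : ∀ a, 0 < ι a) (m : Fin g → ℕ)
    (hm : ∀ a, 1 ≤ m a) (hconf : ∀ a, 0 ≤ vacancy L g ι m a) :
    (periodMatrix L g ι m).IsSymm ∧ (periodMatrix L g ι m).PosDef := by
  have hsymm : (periodMatrix L g ι m).IsSymm := by
    ext a b
    simp only [Matrix.transpose_apply, periodMatrix, Matrix.of_apply]
    by_cases h : a = b
    · subst h; ring
    · rw [if_neg h, if_neg (Ne.symm h), min_comm]; ring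
  refine ⟨hsymm, Matrix.posDef_iff_dotProduct_mulVec.mpr ⟨?_, ?_⟩⟩
  · rw [Matrix.IsHermitian, Matrix.conjTranspose]
    ext a b; simpa using congrFun (congrFun hsymm a) b
  intro x hx
  have hstar : star x = x := rfl
  set y : Fin g → ℝ := fun a => (m a : ℝ) * x a with hy
  have hyne : y ≠ 0 := by
    obtain ⟨a, ha⟩ := Function.ne_iff.mp hx
    refine Function.ne_iff.mpr ⟨a, ?_⟩
    have : (0:ℝ) < m a := by exact_mod_cast hm a
    simp only [hy, Pi.zero_apply]
    exact mul_ne_zero (ne_of_gt this) ha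
  have key : ∀ a : Fin g, ∑ b : Fin g, periodMatrix L g ι m a b * x b
      = (vacancy L g ι m a : ℝ) * m a * x a
        + ∑ b : Fin g, 2 * (min (ι a) (ι b) : ℝ) * m a * m b * x b := by
    intro a
    simp only [periodMatrix, Matrix.of_apply, add_mul, Finset.sum_add_distrib, ite_mul,
      zero_mul]
    congr 1
    simp [Finset.sum_ite_eq]
  have hdp : dotProduct (star x) (periodMatrix L g ι m *ᵥ x)
      = (∑ a : Fin g, (vacancy L g ι m a : ℝ) * m a * x a ^ 2)
        + 2 * ∑ a : Fin g, ∑ b : Fin g, (min (ι a) (ι b) : ℝ) * y a * y b := by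
    rw [hstar]
    simp only [dotProduct, Matrix.mulVec]
    calc ∑ a : Fin g, x a * ∑ b : Fin g, periodMatrix L g ι m a b * x b
        = ∑ a : Fin g, ((vacancy L g ι m a : ℝ) * m a * x a ^ 2
            + ∑ b : Fin g, (min (ι a) (ι b) : ℝ) * y a * y b * 2) := by
          refine Finset.sum_congr rfl fun a _ => ?_
          rw [key a, mul_add, Finset.mul_sum]
          congr 1
          · ring
          · refine Finset.sum_congr rfl fun b _ => ?_
            simp only [hy]; ring
      _ = _ := by
          rw [Finset.sum_add_distrib]
          congr 1
          simp only [Finset.mul_sum]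
          exact Finset.sum_congr rfl fun a _ => Finset.sum_congr rfl fun b _ => by ring
  rw [hdp]
  have h1 : 0 ≤ ∑ a : Fin g, (vacancy L g ι m a : ℝ) * m a * x a ^ 2 := by
    refine Finset.sum_nonneg fun a _ => ?_
    have : (0:ℝ) ≤ (vacancy L g ι m a : ℝ) := by exact_mod_cast hconf a
    positivity
  have h2 := gram_pos ι hι hιpos y hyne
  linarith
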